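/- arXiv:2004.11065 — 3 statements merged into one kernel-verified Lean document; each statement's English description precedes it below -/
import Mathlib

section
/- Let H = L + D be an n×n strictly loopy Laplacian, where L is a symmetric matrix with zero row sums and D = diag(w₁₁,…,wₙₙ) ≠ 0 is a diagonal matrix. Define the augmented (n+1)×(n+1) matrix L̂ = [[H, -D𝟏], [-𝟏ᵀD, Σᵢ wᵢᵢ]]. Then H is positive definite if and only if L̂ is positive semidefinite with a simple zero eigenvalue. -/
open Matrix

/-- Lemma 4 of the paper: a strictly loopy Laplacian `H = L + D` is positive
definite iff its augmented Laplacian `L̂` is PSD with a simple zero eigenvalue. -/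
theorem strictly_loopy_posDef_iff_augmented
    (n : ℕ) (L : Matrix (Fin n) (Fin n) ℝ) (w : Fin n → ℝ)
    (hLsym : L.IsSymm)
    (hrow : L.mulVec (fun _ => (1:ℝ)) = 0)
    (hw : w ≠ 0)
    (Lhat : Matrix (Fin n ⊕ Unit) (Fin n ⊕ Unit) ℝ)
    (hhat : Lhat = fromBlocks (L + diagonal w)
      (of fun i (_ : Unit) => -(w i))
      (of fun (_ : Unit) i => -(w i))
      (of fun _ _ => ∑ i, w i)) :
    (L + diagonal w).PosDef ↔
      (Lhat.PosSemidef ∧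
        ∀ x : Fin n ⊕ Unit → ℝ, Lhat.mulVec x = 0 → ∃ c : ℝ, x = c • (fun _ => (1:ℝ))) := by
  have hLone : ∀ v : Fin n → ℝ, (fun _ => (1:ℝ)) ⬝ᵥ L *ᵥ v = 0 := by
    intro v
    rw [dotProduct_mulVec]
    have : (fun _ => (1:ℝ)) ᵥ* L = 0 := by
      conv_lhs => rw [← hLsym]
      rw [vecMul_transpose, hrow]
    rw [this, zero_dotProduct]
  -- the key quadratic identity
  have key : ∀ x : Fin n ⊕ Unit → ℝ,
      x ⬝ᵥ Lhat *ᵥ x =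
        (fun i => x (Sum.inl i) - x (Sum.inr ())) ⬝ᵥ
          (L + diagonal w) *ᵥ (fun i => x (Sum.inl i) - x (Sum.inr ())) := by
    intro x
    set y : Fin n → ℝ := fun i => x (Sum.inl i) with hy
    set t : ℝ := x (Sum.inr ()) with ht
    set z : Fin n → ℝ := fun i => y i - t with hzdef
    have hz : z = y - t • (fun _ => (1:ℝ)) := by
      funext i; simp [hzdef]
    -- RHS
    have hR : z ⬝ᵥ (L + diagonal w) *ᵥ z
        = y ⬝ᵥ L *ᵥ y + ∑ i, w i * (y i - t) * (y i - t) := by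
      rw [add_mulVec, dotProduct_add]
      have h1 : z ⬝ᵥ L *ᵥ z = y ⬝ᵥ L *ᵥ y := by
        rw [hz, mulVec_sub, dotProduct_sub, sub_dotProduct, sub_dotProduct]
        have e1 : L *ᵥ (t • fun _ => (1:ℝ)) = 0 := by
          rw [mulVec_smul, hrow, smul_zero]
        have e2 : (t • fun _ => (1:ℝ)) ⬝ᵥ L *ᵥ y = 0 := by
          rw [smul_dotProduct, hLone, smul_zero]
        rw [e1, e2, dotProduct_zero, dotProduct_zero]
        ring
      have h2 : z ⬝ᵥ (diagonal w) *ᵥ z = ∑ i, w i * (y i - t) * (y i - t) := by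
        simp only [dotProduct, mulVec_diagonal]
        exact Finset.sum_congr rfl fun i _ => by simp [hzdef]; ring
      rw [h1, h2]
    -- LHS
    have hL : x ⬝ᵥ Lhat *ᵥ x
        = y ⬝ᵥ L *ᵥ y + ∑ i, w i * (y i - t) * (y i - t) := by
      have hx : x = Sum.elim y (fun _ => t) := by
        funext i; cases i with
        | inl i => rfl
        | inr u => cases u; rfl
      rw [hhat, hx, fromBlocks_mulVec, sumElim_dotProduct_sumElim]
      simp only [Sum.elim_comp_inl, Sum.elim_comp_inr]
      have hB : (of fun i (_ : Unit) => -(w i)) *ᵥ (fun _ : Unit => t)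
          = fun i => -(w i) * t := by
        funext i; simp [mulVec, dotProduct]
      have hC : (of fun (_ : Unit) i => -(w i)) *ᵥ y
          = fun _ : Unit => ∑ i, -(w i) * y i := by
        funext u; simp [mulVec, dotProduct]
      have hD : (of fun (_ : Unit) (_ : Unit) => ∑ i, w i) *ᵥ (fun _ : Unit => t)
          = fun _ : Unit => (∑ i, w i) * t := by
        funext u; simp [mulVec, dotProduct]
      rw [hB, hC, hD, add_mulVec, dotProduct_add, dotProduct_add, dotProduct_add]
      have h1 : y ⬝ᵥ (diagonal w) *ᵥ y = ∑ i, w i * y i * y i := by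
        simp only [dotProduct, mulVec_diagonal]
        exact Finset.sum_congr rfl fun i _ => by ring
      have h2 : y ⬝ᵥ (fun i => -(w i) * t) = ∑ i, -(w i) * t * y i := by
        simp only [dotProduct]
        exact Finset.sum_congr rfl fun i _ => by ring
      have h3 : (fun _ : Unit => t) ⬝ᵥ (fun _ : Unit => ∑ i, -(w i) * y i)
          = ∑ i, t * (-(w i) * y i) := by
        simp [dotProduct, Finset.mul_sum]
      have h4 : (fun _ : Unit => t) ⬝ᵥ (fun _ : Unit => (∑ i, w i) * t)
          = ∑ i, t * w i * t := by
        simp [dotProduct, Finset.sum_mul, Finset.mul_sum]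
        exact Finset.sum_congr rfl fun i _ => by ring
      rw [h1, h2, h3, h4]
      rw [add_assoc, add_assoc, ← Finset.sum_add_distrib, ← Finset.sum_add_distrib, ← Finset.sum_add_distrib]
      congr 1
      exact Finset.sum_congr rfl fun i _ => by ring
    rw [hL, hzdef] at *
    rw [hL, hR]
  -- symmetry of Lhat
  have hHherm : (L + diagonal w).IsHermitian := by
    show (L + diagonal w)ᴴ = L + diagonal w
    have : (L + diagonal w)ᴴ = (L + diagonal w)ᵀ := by
      ext i j; simp [conjTranspose_apply]
    rw [this, transpose_add, diagonal_transpose, hLsym]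
  have hLhatherm : Lhat.IsHermitian := by
    rw [hhat]
    refine IsHermitian.fromBlocks hHherm ?_ ?_
    · ext u i; simp [conjTranspose_apply]
    · ext u v; simp [conjTranspose_apply]
  constructor
  · intro hH
    constructor
    · refine PosSemidef.of_dotProduct_mulVec_nonneg hLhatherm fun x => ?_
      have := hH.posSemidef.dotProduct_mulVec_nonneg (fun i => x (Sum.inl i) - x (Sum.inr ()))
      simpa [key x] using this
    · intro x hx
      have h0 : x ⬝ᵥ Lhat *ᵥ x = 0 := by rw [hx, dotProduct_zero]
      rw [key x] at h0
      have hz0 : (fun i => x (Sum.inl i) - x (Sum.inr ())) = 0 := by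
        by_contra hne
        have := hH.dotProduct_mulVec_pos hne
        simp only [star_trivial] at this
        rw [h0] at this
        exact lt_irrefl 0 this
      refine ⟨x (Sum.inr ()), ?_⟩
      funext i
      cases i with
      | inl i =>
        have := congrFun hz0 i
        simp at this
        simp [sub_eq_zero.mp this]
      | inr u => cases u; simp
  · rintro ⟨hpsd, hker⟩
    refine PosDef.of_dotProduct_mulVec_pos hHherm fun v hv => ?_
    set x : Fin n ⊕ Unit → ℝ := Sum.elim v (fun _ => 0) with hxdef
    have hform : v ⬝ᵥ (L + diagonal w) *ᵥ v = x ⬝ᵥ Lhat *ᵥ x := by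
      rw [key x]
      simp [hxdef]
    have hge : 0 ≤ x ⬝ᵥ Lhat *ᵥ x := by simpa using hpsd.dotProduct_mulVec_nonneg x
    have hne : x ⬝ᵥ Lhat *ᵥ x ≠ 0 := by
      intro h0
      have hker0 : Lhat *ᵥ x = 0 := by
        have := (hpsd.dotProduct_mulVec_zero_iff x).mp (by simpa using h0)
        exact this
      obtain ⟨c, hc⟩ := hker x hker0
      have hc0 : c = 0 := by
        have := congrFun hc (Sum.inr ())
        simpa [hxdef] using this.symm
      apply hv
      funext i
      have := congrFun hc (Sum.inl i)
      simpa [hxdef, hc0] using this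
    simp only [star_trivial]
    rw [hform]
    exact lt_of_le_of_ne hge (Ne.symm hne)
end

section
/- Let L̂ be the augmented Laplacian of a strictly loopy Laplacian H = L + D as above. If L̂ is positive semidefinite with a simple zero eigenvalue, then for every nonzero x ∈ ℝⁿ one has xᵀHx > 0, i.e., H is positive definite. -/
open Matrix

/-- Sufficiency in Lemma 4: if the augmented Laplacian of `H = L + D` is PSD with
simple zero eigenvalue, then `xᵀHx > 0` for every nonzero `x`, i.e., `H ≻ 0`. -/
theorem augmented_psd_simple_zero_implies_posDef
    (n : ℕ) (L : Matrix (Fin n) (Fin n) ℝ) (w : Fin n → ℝ)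
    (hLsym : L.IsSymm)
    (hrow : L.mulVec (fun _ => (1:ℝ)) = 0)
    (hw : w ≠ 0)
    (Lhat : Matrix (Fin n ⊕ Unit) (Fin n ⊕ Unit) ℝ)
    (hhat : Lhat = fromBlocks (L + diagonal w)
      (of fun i (_ : Unit) => -(w i))
      (of fun (_ : Unit) i => -(w i))
      (of fun _ _ => ∑ i, w i))
    (hpsd : Lhat.PosSemidef)
    (hker : ∀ x : Fin n ⊕ Unit → ℝ, Lhat.mulVec x = 0 → ∃ c : ℝ, x = c • (fun _ => (1:ℝ))) :
    ∀ x : Fin n → ℝ, x ≠ 0 → 0 < dotProduct x ((L + diagonal w).mulVec x) := by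
  intro x hx
  set H := L + diagonal w with hH
  set y : Fin n ⊕ Unit → ℝ := Sum.elim x (fun _ => 0) with hy
  have hquad : dotProduct y (Lhat.mulVec y) = dotProduct x (H.mulVec x) := by
    subst hhat
    rw [hy, fromBlocks_mulVec]
    simp [Matrix.mulVec, dotProduct, Fintype.sum_sum_type]
  have hnn : 0 ≤ dotProduct y (Lhat.mulVec y) := by
    have := hpsd.dotProduct_mulVec_nonneg y
    simpa using this
  rcases lt_or_eq_of_le hnn with h | h
  · rw [← hquad]; exact h
  · exfalso
    have hz : Lhat.mulVec y = 0 := by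
      have := (hpsd.dotProduct_mulVec_zero_iff y).mp ?_
      · exact this
      · simpa using h.symm
    obtain ⟨c, hc⟩ := hker y hz
    have h0 : (0:ℝ) = c := by
      have := congrFun hc (Sum.inr ())
      simpa [hy] using this
    apply hx
    funext i
    have := congrFun hc (Sum.inl i)
    simpa [hy, ← h0] using this
end

section
/- Let L ∈ ℝ^{(n+1)×(n+1)} be symmetric positive semidefinite with L𝟏 = 0 and simple zero eigenvalue, let v ∈ ℝ^{n+1} with vᵀ𝟏 = 0 and v ≠ 0, and let d < 0 be a real scalar. Then L + d·vvᵀ is positive semidefinite with a simple zero eigenvalue if and only if -d⁻¹ > vᵀL†v, equivalently -d < (vᵀL†v)⁻¹. -/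
open Matrix

/-- Rank-one perturbation condition underlying Theorem 1: for `L` symmetric PSD
with kernel `span{𝟏}`, `v ⊥ 𝟏` nonzero and `d < 0`, the matrix `L + d·vvᵀ` is PSD
with a simple zero eigenvalue iff `vᵀL†v < -d⁻¹`, where the pseudoinverse `P = L†`
is characterized by the Penrose conditions. -/
theorem rank_one_perturbation_psd_iff
    (n : ℕ) (L P : Matrix (Fin (n + 1)) (Fin (n + 1)) ℝ)
    (v : Fin (n + 1) → ℝ) (d : ℝ)
    (hLsym : L.IsSymm)
    (hrow : L.mulVec (fun _ => (1:ℝ)) = 0)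
    (hpsd : L.PosSemidef)
    (hker : ∀ x : Fin (n + 1) → ℝ, L.mulVec x = 0 ↔ ∃ c : ℝ, x = c • (fun _ => (1:ℝ)))
    (hv1 : dotProduct v (fun _ => (1:ℝ)) = 0) (hv : v ≠ 0)
    (hd : d < 0)
    (hP1 : L * P * L = L) (hP2 : P * L * P = P)
    (hP3 : (L * P)ᵀ = L * P) (hP4 : (P * L)ᵀ = P * L) :
    ((L + d • vecMulVec v v).PosSemidef ∧
        ∀ x : Fin (n + 1) → ℝ, (L + d • vecMulVec v v).mulVec x = 0 →
          ∃ c : ℝ, x = c • (fun _ => (1:ℝ))) ↔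
      dotProduct v (P.mulVec v) < -d⁻¹ := by
  have hLsym' : Lᵀ = L := hLsym
  have h1 : ∀ a : Fin (n+1) → ℝ, a ᵥ* L = L *ᵥ a := by
    intro a; conv_lhs => rw [← hLsym', vecMul_transpose]
  have hLdot : ∀ a b : Fin (n+1) → ℝ, a ⬝ᵥ L *ᵥ b = (L *ᵥ a) ⬝ᵥ b := by
    intro a b; rw [dotProduct_mulVec, h1]
  set w : Fin (n+1) → ℝ := P.mulVec v with hw
  set α : ℝ := dotProduct v (P.mulVec v) with hαdef
  have hLLP : L * (L * P) = L := by
    calc L * (L * P) = Lᵀ * (L * P)ᵀ := by rw [hLsym', hP3]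
    _ = ((L * P) * L)ᵀ := (transpose_mul _ _).symm
    _ = (L * P * L)ᵀ := rfl
    _ = Lᵀ := by rw [hP1]
    _ = L := hLsym'
  have hLw : L *ᵥ w = v := by
    have hu : L *ᵥ (v - L *ᵥ w) = 0 := by
      rw [mulVec_sub, hw, mulVec_mulVec, mulVec_mulVec, mul_assoc, hLLP, sub_self]
    obtain ⟨c, hc⟩ := (hker _).mp hu
    have hdot : (v - L *ᵥ w) ⬝ᵥ (fun _ => (1:ℝ)) = c * (n + 1) := by
      rw [hc, smul_dotProduct, smul_eq_mul]
      congr 1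
      simp [dotProduct]
    have hL1 : (L *ᵥ w) ⬝ᵥ (fun _ => (1:ℝ)) = 0 := by
      rw [dotProduct_comm, hLdot, hrow, zero_dotProduct]
    rw [sub_dotProduct, hv1, hL1, sub_zero] at hdot
    have hc0 : c = 0 := by
      have : (0:ℝ) < (n:ℝ) + 1 := by positivity
      nlinarith [hdot]
    have : v - L *ᵥ w = 0 := by rw [hc, hc0]; simp
    exact (sub_eq_zero.mp this).symm
  have hvw : v ⬝ᵥ w = α := rfl
  have hwLw : w ⬝ᵥ L *ᵥ w = α := by rw [hLw, dotProduct_comm]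
  have hα0 : 0 ≤ α := by
    have h := hpsd.dotProduct_mulVec_nonneg w
    simpa [hwLw] using h
  have hLxnn : ∀ x : Fin (n+1) → ℝ, 0 ≤ x ⬝ᵥ L *ᵥ x := by
    intro x; have h := hpsd.dotProduct_mulVec_nonneg x; simpa using h
  have e1 : ∀ x : Fin (n+1) → ℝ, x ⬝ᵥ L *ᵥ w = v ⬝ᵥ x := by
    intro x; rw [hLw, dotProduct_comm]
  have e2 : ∀ x : Fin (n+1) → ℝ, w ⬝ᵥ L *ᵥ x = v ⬝ᵥ x := by
    intro x; rw [hLdot, hLw]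
  have hCS : ∀ x : Fin (n+1) → ℝ, (v ⬝ᵥ x)^2 ≤ α * (x ⬝ᵥ L *ᵥ x) := by
    intro x
    have key : ∀ t : ℝ, 0 ≤ α * (t*t) + (2*(v ⬝ᵥ x))*t + (x ⬝ᵥ L *ᵥ x) := by
      intro t
      have h0 := hpsd.dotProduct_mulVec_nonneg (x + t • w)
      simp only [star_trivial, mulVec_add, mulVec_smul, dotProduct_add, add_dotProduct,
        dotProduct_smul, smul_dotProduct, smul_eq_mul, e1, e2, hwLw] at h0
      nlinarith [h0]
    have hdis := discrim_le_zero key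
    rw [discrim] at hdis
    nlinarith [hdis]
  have hMmul : ∀ x : Fin (n+1) → ℝ,
      (L + d • vecMulVec v v) *ᵥ x = L *ᵥ x + (d * (v ⬝ᵥ x)) • v := by
    intro x
    rw [add_mulVec, smul_mulVec]
    congr 1
    ext i
    simp only [mulVec, dotProduct, vecMulVec_apply, Pi.smul_apply, smul_eq_mul,
      Finset.mul_sum]
    rw [Finset.sum_mul]
    congr 1; ext j; ring
  have hMq : ∀ x : Fin (n+1) → ℝ,
      x ⬝ᵥ (L + d • vecMulVec v v) *ᵥ x = x ⬝ᵥ L *ᵥ x + d * (v ⬝ᵥ x)^2 := by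
    intro x
    rw [hMmul, dotProduct_add, dotProduct_smul, smul_eq_mul, dotProduct_comm x v]
    ring
  constructor
  · rintro ⟨hM, hK⟩
    have hαpos : 0 < α := by
      rcases eq_or_lt_of_le hα0 with h0 | h0
      · exfalso
        have hz : L *ᵥ w = 0 := by
          have := (hpsd.dotProduct_mulVec_zero_iff w).mp (by simpa [hwLw] using h0.symm)
          simpa using this
        exact hv (by rw [← hLw, hz])
      · exact h0
    have hq := hM.dotProduct_mulVec_nonneg w
    simp only [star_trivial] at hq
    rw [hMq w, hwLw, hvw] at hq
    have hge : 0 ≤ 1 + d * α := by nlinarith [hq, hαpos]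
    have hne : 1 + d * α ≠ 0 := by
      intro h0
      have hqz : w ⬝ᵥ (L + d • vecMulVec v v) *ᵥ w = 0 := by
        rw [hMq w, hwLw, hvw]; nlinarith [h0]
      have hMw : (L + d • vecMulVec v v) *ᵥ w = 0 := by
        have := (hM.dotProduct_mulVec_zero_iff w).mp (by simpa using hqz)
        simpa using this
      obtain ⟨c, hc⟩ := hK w hMw
      apply hv
      rw [← hLw, hc, mulVec_smul]
      rw [hrow]; simp
    have hpos : 0 < 1 + d * α := lt_of_le_of_ne hge (Ne.symm hne)
    nlinarith [mul_inv_cancel₀ hd.ne, hpos]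
  · intro hlt
    have h1pos : 0 < 1 + d * α := by
      nlinarith [mul_inv_cancel₀ hd.ne, mul_lt_mul_of_neg_left hlt hd]
    have hMherm : (L + d • vecMulVec v v).IsHermitian := by
      have ht : (L + d • vecMulVec v v)ᵀ = (L + d • vecMulVec v v) := by
        rw [transpose_add, transpose_smul, hLsym']
        congr 1
        ext i j
        simp [vecMulVec_apply, mul_comm]
      rw [IsHermitian, conjTranspose_eq_transpose_of_trivial]; exact ht
    refine ⟨PosSemidef.of_dotProduct_mulVec_nonneg hMherm ?_, ?_⟩
    · intro x
      simp only [star_trivial]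
      rw [hMq x]
      nlinarith [hCS x, hLxnn x, mul_le_mul_of_nonpos_left (hCS x) hd.le,
        mul_nonneg h1pos.le (hLxnn x)]
    · intro x hx
      have hq0 : x ⬝ᵥ L *ᵥ x + d * (v ⬝ᵥ x)^2 = 0 := by
        rw [← hMq x, hx, dotProduct_zero]
      have hx0 : x ⬝ᵥ L *ᵥ x = 0 := by
        nlinarith [hCS x, hLxnn x, mul_le_mul_of_nonpos_left (hCS x) hd.le,
          mul_nonneg h1pos.le (hLxnn x), h1pos]
      have hLx : L *ᵥ x = 0 := by
        have := (hpsd.dotProduct_mulVec_zero_iff x).mp (by simpa using hx0)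
        simpa using this
      exact (hker x).mp hLx
end
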